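/- An asymmetric binary block code C ⊆ {0,1}^n with minimum asymmetric distance Δ (where the asymmetric distance δ(x,y) between codewords counts positions i with x_i = 0 and y_i = 1, and Δ = min over distinct pairs of max(δ(x,y), δ(y,x))) can correct any pattern of t ≤ Δ − 1 errors of type 0 → 1: if x ∈ C and y is obtained from x by flipping at most Δ−1 zeros to ones, then x is the unique codeword z ∈ C such that y dominates z (z_i ≤ y_i for all i) and the number of flipped positions δ(z,y) is at most Δ−1. -/
import Mathlib

/-- The asymmetric distance: number of positions where `x` is 0 and `y` is 1. -/
def asymDist {n : ℕ} (x y : Fin n → Bool) : ℕ :=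
  (Finset.univ.filter fun i => x i = false ∧ y i = true).card

lemma asymDist_mono_right {n : ℕ} (x z y : Fin n → Bool) (h : ∀ i, z i ≤ y i) :
    asymDist x z ≤ asymDist x y := by
  apply Finset.card_le_card
  intro i hi
  simp only [Finset.mem_filter, Finset.mem_univ, true_and] at *
  refine ⟨hi.1, ?_⟩; have := h i; rw [hi.2] at this; exact Bool.eq_true_of_true_le this

/-- Varshamov/Delsarte: a binary code of minimum asymmetric distance `Δ ≥ 1` corrects
any `t ≤ Δ - 1` errors of type `0 → 1`: if `x ∈ C` and `y` is obtained from `x` by flipping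
at most `Δ - 1` zeros to ones, then `x` is the unique codeword dominated by `y` within
asymmetric distance `Δ - 1`. -/
theorem stmt8 {n : ℕ} (C : Set (Fin n → Bool)) (Δ : ℕ) (hΔ : 1 ≤ Δ)
    (hmin : ∀ x ∈ C, ∀ y ∈ C, x ≠ y → Δ ≤ max (asymDist x y) (asymDist y x))
    (x : Fin n → Bool) (hx : x ∈ C) (y : Fin n → Bool)
    (hdom : ∀ i, x i ≤ y i) (herr : asymDist x y ≤ Δ - 1) :
    ∀ z ∈ C, (∀ i, z i ≤ y i) → asymDist z y ≤ Δ - 1 → z = x := by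
  intro z hz hzdom hzerr
  by_contra hne
  have h1 : asymDist z x ≤ Δ - 1 :=
    le_trans (asymDist_mono_right z x y hdom) hzerr
  have h2 : asymDist x z ≤ Δ - 1 :=
    le_trans (asymDist_mono_right x z y hzdom) herr
  have := hmin z hz x hx hne
  omega
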